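/- arXiv:1202.2097 — 8 statements merged into one kernel-verified Lean document; each statement's English description precedes it below -/
import Mathlib

section
/- Suppose for each pair (a,b) with a+b ≥ 1, w^A(a,b) is defined as the minimum of the interval I(a,b) = [w^A(a-1,b), w^A(a,b-1) + Δ⊕B(a,b)] ∩ [min(W₀,W₁), max(W₀,W₁)] where W₁ ≥ w^A(a-1,b) and W₀ ≤ w^A(a,b-1). If inductively w^A(a-2,b+1) ≤ w^A(a-1,b), then w^A(a-1,b+1) ≤ w^A(a-1,b) ≤ w^A(a,b), establishing the cross-monotonicity w^A(a,b) ≥ w^A(a-1,b+1). -/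
-- The pair `(a, b)` of the paper is `(a + 2, b)` here, so `a - 1 ↦ a + 1` and `a - 2 ↦ a`.
theorem stmt4_general (wA W0 W1 : ℕ → ℕ → ℝ) (a b : ℕ)
    (hdef_ab : wA (a + 2) b = max (wA (a + 1) b) (min (W0 (a + 2) b) (W1 (a + 2) b)))
    (hdef_prev : wA (a + 1) (b + 1) =
      max (wA a (b + 1)) (min (W0 (a + 1) (b + 1)) (W1 (a + 1) (b + 1))))
    (hW0_prev : W0 (a + 1) (b + 1) ≤ wA (a + 1) b)
    (hind : wA a (b + 1) ≤ wA (a + 1) b) :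
    wA (a + 1) (b + 1) ≤ wA (a + 1) b ∧ wA (a + 1) b ≤ wA (a + 2) b :=
  ⟨hdef_prev ▸ max_le hind ((min_le_left _ _).trans hW0_prev),
    hdef_ab ▸ le_max_left _ _⟩

/-- Suppose for each pair `(a,b)` with `a+b ≥ 1`, `w^A(a,b)` is defined
as the minimum of the interval
`I(a,b) = [w^A(a-1,b), w^A(a,b-1)+Δ⊕B(a,b)] ∩ [min(W₀,W₁), max(W₀,W₁)]`,
so that (the intersection being nonempty) `w^A(a,b) = max (w^A(a-1,b)) (min W₀ W₁)`,
where `W₁ = W₁(a,b) ≥ w^A(a-1,b)` and `W₀ = W₀(a,b) ≤ w^A(a,b-1)`.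
If inductively `w^A(a-2,b+1) ≤ w^A(a-1,b)`, then
`w^A(a-1,b+1) ≤ w^A(a-1,b) ≤ w^A(a,b)`, i.e. cross-monotonicity
`w^A(a,b) ≥ w^A(a-1,b+1)` holds.
(Indices are shifted: the pair `(a,b)` of the claim is represented as `(a+2, b)`, so
`a-1 ↦ a+1` and `a-2 ↦ a`.) -/
theorem stmt4 (wA W0 W1 : ℕ → ℕ → ℝ) (a b : ℕ)
    (hdef_ab : wA (a + 2) b = max (wA (a + 1) b) (min (W0 (a + 2) b) (W1 (a + 2) b)))
    (hdef_prev : wA (a + 1) (b + 1) =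
      max (wA a (b + 1)) (min (W0 (a + 1) (b + 1)) (W1 (a + 1) (b + 1))))
    (hW1_ab : wA (a + 1) b ≤ W1 (a + 2) b)
    (hW1_prev : wA a (b + 1) ≤ W1 (a + 1) (b + 1))
    (hW0_prev : W0 (a + 1) (b + 1) ≤ wA (a + 1) b)
    (hind : wA a (b + 1) ≤ wA (a + 1) b) :
    wA (a + 1) (b + 1) ≤ wA (a + 1) b ∧ wA (a + 1) b ≤ wA (a + 2) b :=
  stmt4_general wA W0 W1 a b hdef_ab hdef_prev hW0_prev hind
end

section
/- Let w : ℕ → ℝ≥0 be nondecreasing and such that w(t+1) - w(t) ≤ w(t) - w(t-1) for all t ≥ 1 (discrete concavity), with w(0)=0. Then for all integers 0 ≤ b ≤ t, (b/t)·w(t) ≤ ((b+1)/(t+1))·w(t+1). Consequently the uniform random greedy mechanism, whose agent utilities equal (b/t)·w(t), is monotone in each agent's bid. -/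
theorem div_le_add_one_div_add_one {b t : ℝ} (ht : 0 < t) (hbt : b ≤ t) :
    b / t ≤ (b + 1) / (t + 1) := by
  rw [div_le_div_iff₀ ht (by linarith)]
  linarith

theorem natCast_div_le_add_one_div_add_one {b t : ℕ} (hbt : b ≤ t) :
    (b : ℝ) / t ≤ ((b : ℝ) + 1) / ((t : ℝ) + 1) := by
  rcases t.eq_zero_or_pos with rfl | ht
  · simp only [Nat.le_zero.mp hbt, Nat.cast_zero, div_zero, zero_add, div_one, zero_le_one]
  · exact div_le_add_one_div_add_one (by exact_mod_cast ht) (by exact_mod_cast hbt)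

theorem stmt7_general (w : ℕ → ℝ)
    (hnonneg : ∀ t, 0 ≤ w t)
    (hmono : ∀ t, w t ≤ w (t + 1)) :
    ∀ b t : ℕ, b ≤ t →
      ((b : ℝ) / (t : ℝ)) * w t ≤ (((b : ℝ) + 1) / ((t : ℝ) + 1)) * w (t + 1) := by
  intro b t hbt
  exact mul_le_mul (natCast_div_le_add_one_div_add_one hbt) (hmono t) (hnonneg t) (by positivity)

/-- Let `w : ℕ → ℝ≥0` be nondecreasing, discretely concave
(`w(t+1) - w(t) ≤ w(t) - w(t-1)` for `t ≥ 1`), with `w(0) = 0`.  Then for all integers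
`0 ≤ b ≤ t`, `(b/t)·w(t) ≤ ((b+1)/(t+1))·w(t+1)`: the utilities `(b/t)·w(t)` of the
uniform random greedy mechanism are monotone in each agent's bid. -/
theorem stmt7 (w : ℕ → ℝ)
    (hnonneg : ∀ t, 0 ≤ w t)
    (hmono : ∀ t, w t ≤ w (t + 1))
    (hconc : ∀ t, w (t + 2) - w (t + 1) ≤ w (t + 1) - w t)
    (hzero : w 0 = 0) :
    ∀ b t : ℕ, b ≤ t →
      ((b : ℝ) / (t : ℝ)) * w t ≤ (((b : ℝ) + 1) / ((t : ℝ) + 1)) * w (t + 1) :=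
  stmt7_general w hnonneg hmono
end

section
/- Let f : 2^U → ℝ≥0 be monotone nondecreasing and submodular with f(∅)=0, and let G_t be the greedy set of size t. Then f(G_t) ≥ (1 - (1-1/t)^t) · max_{|S|=t} f(S) ≥ (1 - 1/e) · max_{|S|=t} f(S). -/
/-!
Let `S` be any set of size `t`. By submodularity, adding the elements of `S` one at a time to
the current greedy set `A` raises `f` by at most the sum of their marginal gains at `A`, each of
which is at most the greedy gain. Hence each greedy step closes at least a `1/t` fraction of the
gap `f S - f A`, so after `t` steps the gap is at most `(1 - 1/t)^t f S ≤ e⁻¹ f S`.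
-/

open Finset

section Submodular

variable {α : Type*} [DecidableEq α] {f : Finset α → ℝ}

theorem sub_le_sum_marginal_of_submodular
    (hsub : ∀ S T : Finset α, S ⊆ T → ∀ c : α, f (insert c T) - f T ≤ f (insert c S) - f S)
    (T A : Finset α) : f (T ∪ A) - f A ≤ ∑ e ∈ T, (f (insert e A) - f A) := by
  induction T using Finset.induction_on with
  | empty => simp
  | @insert x T hx ih =>
    rw [sum_insert hx, insert_union]
    have := hsub A (T ∪ A) subset_union_right x
    linarith

theorem sub_le_card_mul_greedy_gain
    (hmono : ∀ S T : Finset α, S ⊆ T → f S ≤ f T)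
    (hsub : ∀ S T : Finset α, S ⊆ T → ∀ c : α, f (insert c T) - f T ≤ f (insert c S) - f S)
    {A : Finset α} {c : α} (hc : ∀ d, f (insert d A) - f A ≤ f (insert c A) - f A)
    (S : Finset α) : f S - f A ≤ #S * (f (insert c A) - f A) :=
  calc f S - f A ≤ f (S ∪ A) - f A := by linarith [hmono _ _ (subset_union_left : S ⊆ S ∪ A)]
    _ ≤ ∑ e ∈ S, (f (insert e A) - f A) := sub_le_sum_marginal_of_submodular hsub S A
    _ ≤ #S • (f (insert c A) - f A) := sum_le_card_nsmul _ _ _ fun d _ ↦ hc d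
    _ = #S * (f (insert c A) - f A) := nsmul_eq_mul _ _

theorem sub_greedy_step_le
    (hmono : ∀ S T : Finset α, S ⊆ T → f S ≤ f T)
    (hsub : ∀ S T : Finset α, S ⊆ T → ∀ c : α, f (insert c T) - f T ≤ f (insert c S) - f S)
    {A : Finset α} {c : α} (hc : ∀ d, f (insert d A) - f A ≤ f (insert c A) - f A)
    {S : Finset α} (hS : S.Nonempty) :
    f S - f (insert c A) ≤ (1 - 1 / #S) * (f S - f A) := by
  have hpos : (0 : ℝ) < #S := by exact_mod_cast hS.card_pos
  have hgain : (f S - f A) / #S ≤ f (insert c A) - f A := by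
    rw [div_le_iff₀ hpos, mul_comm]
    exact sub_le_card_mul_greedy_gain hmono hsub hc S
  linarith [show (1 - 1 / (#S : ℝ)) * (f S - f A) = (f S - f A) - (f S - f A) / #S by ring]

end Submodular

theorem one_sub_one_div_pow_le_inv_exp {t : ℕ} (ht : 1 ≤ t) :
    (1 - 1 / (t : ℝ)) ^ t ≤ 1 / Real.exp 1 := by
  rw [one_div (Real.exp 1), ← Real.exp_neg]
  exact Real.one_sub_div_pow_le_exp_neg (by exact_mod_cast ht)

theorem stmt9_general {U : Type*} [DecidableEq U]
    (f : Finset U → ℝ)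
    (hempty : f ∅ = 0)
    (hmono : ∀ S T : Finset U, S ⊆ T → f S ≤ f T)
    (hsub : ∀ S T : Finset U, S ⊆ T → ∀ c : U,
      f (insert c T) - f T ≤ f (insert c S) - f S)
    (G : ℕ → Finset U)
    (hG0 : G 0 = ∅)
    (t : ℕ) (ht : 1 ≤ t)
    (hstep : ∀ n < t, ∃ c, c ∉ G n ∧ G (n + 1) = insert c (G n) ∧
      ∀ d : U, f (insert d (G n)) - f (G n) ≤ f (insert c (G n)) - f (G n)) :
    ∀ S : Finset U, S.card = t →
      (1 - (1 - 1 / (t : ℝ)) ^ t) * f S ≤ f (G t) ∧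
      (1 - 1 / Real.exp 1) * f S ≤ (1 - (1 - 1 / (t : ℝ)) ^ t) * f S := by
  intro S hS
  have hSne : S.Nonempty := card_pos.mp (hS ▸ ht)
  have hcontract : ∀ n < t, f S - f (G (n + 1)) ≤ (1 - 1 / (t : ℝ)) * (f S - f (G n)) := by
    intro n hn
    obtain ⟨c, -, hGn, hc⟩ := hstep n hn
    rw [hGn, ← hS]
    exact sub_greedy_step_le hmono hsub hc hSne
  have hratio : (0 : ℝ) ≤ 1 - 1 / t := by
    rw [sub_nonneg, div_le_one (by positivity)]
    exact_mod_cast ht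
  have hgap := le_geom (u := fun n ↦ f S - f (G n)) hratio t hcontract
  simp only [hG0, hempty, sub_zero] at hgap
  have hfS : 0 ≤ f S := hempty ▸ hmono ∅ S (empty_subset S)
  constructor
  · linarith
  · exact mul_le_mul_of_nonneg_right (by linarith [one_sub_one_div_pow_le_inv_exp ht]) hfS

/-- Nemhauser–Wolsey–Fisher: Let `f : 2^U → ℝ≥0` be monotone
nondecreasing and submodular with `f(∅) = 0`, and let `G_t` be the greedy set of
size `t` (each step adds an element of maximum marginal gain).  Then
`f(G_t) ≥ (1 - (1 - 1/t)^t) · max_{|S| = t} f S ≥ (1 - 1/e) · max_{|S| = t} f S`. -/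
theorem stmt9 {U : Type*} [Fintype U] [DecidableEq U]
    (f : Finset U → ℝ)
    (hnonneg : ∀ S, 0 ≤ f S)
    (hempty : f ∅ = 0)
    (hmono : ∀ S T : Finset U, S ⊆ T → f S ≤ f T)
    (hsub : ∀ S T : Finset U, S ⊆ T → ∀ c : U,
      f (insert c T) - f T ≤ f (insert c S) - f S)
    (G : ℕ → Finset U)
    (hG0 : G 0 = ∅)
    (t : ℕ) (ht : 1 ≤ t) (hcard : t ≤ Fintype.card U)
    (hstep : ∀ n < t, ∃ c, c ∉ G n ∧ G (n + 1) = insert c (G n) ∧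
      ∀ d : U, f (insert d (G n)) - f (G n) ≤ f (insert c (G n)) - f (G n)) :
    ∀ S : Finset U, S.card = t →
      (1 - (1 - 1 / (t : ℝ)) ^ t) * f S ≤ f (G t) ∧
      (1 - 1 / Real.exp 1) * f S ≤ (1 - (1 - 1 / (t : ℝ)) ^ t) * f S :=
  stmt9_general f hempty hmono hsub G hG0 t ht hstep
end

section
/- (Locally greedy 2-approximation for partition matroids) Let g be a monotone nondecreasing submodular function on subsets of E = E_1 ∪ ... ∪ E_k (disjoint) with g(∅)=0, and cardinality bounds d_1,...,d_k. Consider any algorithm that processes the parts in an arbitrary interleaved order, at each step adding to the current solution an element of some designated part E_i (not yet having d_i elements selected from it) maximizing the marginal gain of g. The resulting independent set X satisfies 2·g(X) ≥ g(O) for every independent set O (i.e., every O with |O ∩ E_i| ≤ d_i for all i). -/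
/-!
Let `X` be the greedy output and `O` independent. Submodularity and monotonicity give
`g O ≤ g X + ∑_{e ∈ O \ X} (g (X ∪ {e}) - g X)`. An element `e ∈ O \ X` of part `i` was still
available at each of the `d i` steps devoted to part `i`, so its marginal gain on `X` is at most
the gain of any of those steps. As `O` has at most `d i` elements of part `i`, the sum over
`O \ X` is bounded by the total gain of the run, which telescopes to `g X`.
-/

open Finset

theorem Finset.sum_le_sum_of_card_le_of_forall_le {ι κ M : Type*} [AddCommMonoid M]
    [LinearOrder M] [IsOrderedAddMonoid M] {A : Finset ι} {B : Finset κ} {f : ι → M}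
    {h : κ → M} (hcard : #A ≤ #B) (hle : ∀ a ∈ A, ∀ b ∈ B, f a ≤ h b)
    (hnonneg : ∀ b ∈ B, 0 ≤ h b) :
    ∑ a ∈ A, f a ≤ ∑ b ∈ B, h b := by
  rcases A.eq_empty_or_nonempty with rfl | hA
  · simpa using sum_nonneg hnonneg
  obtain ⟨b₀, hb₀, hmin⟩ := B.exists_min_image h (card_pos.mp (hA.card_pos.trans_le hcard))
  calc ∑ a ∈ A, f a ≤ #A • h b₀ := sum_le_card_nsmul A f _ fun a ha => hle a ha b₀ hb₀
    _ ≤ #B • h b₀ := nsmul_le_nsmul_left (hnonneg b₀ hb₀) hcard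
    _ ≤ ∑ b ∈ B, h b := card_nsmul_le_sum B h _ hmin

theorem apply_union_le_add_sum_sdiff {E : Type*} [DecidableEq E] (g : Finset E → ℝ)
    (hsub : ∀ S T : Finset E, S ⊆ T → ∀ c : E,
      g (insert c T) - g T ≤ g (insert c S) - g S)
    (S T : Finset E) :
    g (S ∪ T) ≤ g T + ∑ e ∈ S \ T, (g (insert e T) - g T) := by
  induction S using Finset.induction_on with
  | empty => simp
  | @insert a S ha ih =>
    by_cases haT : a ∈ T
    · rwa [insert_union, insert_eq_of_mem (mem_union_right _ haT), insert_sdiff_of_mem _ haT]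
    · have haS : a ∉ S \ T := fun h => ha (mem_sdiff.mp h).1
      rw [insert_union, insert_sdiff_of_notMem _ haT, sum_insert haS]
      linarith [hsub T (S ∪ T) subset_union_right a]

open Finset in
theorem stmt10_general {E : Type*} [DecidableEq E]
    {k : ℕ} (part : E → Fin k) (d : Fin k → ℕ)
    (g : Finset E → ℝ)
    (hempty : g ∅ = 0)
    (hmono : ∀ S T : Finset E, S ⊆ T → g S ≤ g T)
    (hsub : ∀ S T : Finset E, S ⊆ T → ∀ c : E,
      g (insert c T) - g T ≤ g (insert c S) - g S)
    (N : ℕ)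
    (π : ℕ → Fin k)
    (hπ : ∀ i : Fin k, ((Finset.range N).filter (fun j => π j = i)).card = d i)
    (X : ℕ → Finset E)
    (hX0 : X 0 = ∅)
    (hstep : ∀ j < N, ∃ c : E, part c = π j ∧ c ∉ X j ∧ X (j + 1) = insert c (X j) ∧
      ∀ e : E, part e = π j → e ∉ X j →
        g (insert e (X j)) - g (X j) ≤ g (insert c (X j)) - g (X j)) :
    ∀ O : Finset E, (∀ i : Fin k, (O.filter (fun e => part e = i)).card ≤ d i) →
      g O ≤ 2 * g (X N) := by
  intro O hO
  have hsucc : ∀ j < N, X j ⊆ X (j + 1) := fun j hj => by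
    obtain ⟨c, -, -, hXc, -⟩ := hstep j hj
    exact hXc ▸ subset_insert c (X j)
  have hX : ∀ j < N, X j ⊆ X N := fun j hj =>
    monotoneOn_of_le_succ Set.ordConnected_Iic
      (fun i _ _ hi => hsucc i (Order.succ_le_iff.mp hi)) hj.le (le_refl N) hj.le
  have hpart : ∀ i, ∑ e ∈ O \ X N with part e = i, (g (insert e (X N)) - g (X N)) ≤
      ∑ j ∈ range N with π j = i, (g (X (j + 1)) - g (X j)) := by
    intro i
    refine sum_le_sum_of_card_le_of_forall_le ?_ ?_ ?_
    · exact (card_le_card (filter_subset_filter _ sdiff_subset)).trans ((hO i).trans (hπ i).ge)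
    · simp only [mem_filter, mem_sdiff, mem_range]
      rintro e ⟨⟨-, heX⟩, rfl⟩ j ⟨hj, hπj⟩
      obtain ⟨c, -, -, hXc, hmax⟩ := hstep j hj
      rw [hXc]
      exact (hsub _ _ (hX j hj) e).trans (hmax e hπj.symm fun h => heX (hX j hj h))
    · simp only [mem_filter, mem_range]
      rintro j ⟨hj, -⟩
      exact sub_nonneg.mpr (hmono _ _ (hsucc j hj))
  calc g O ≤ g (O ∪ X N) := hmono _ _ subset_union_left
    _ ≤ g (X N) + ∑ e ∈ O \ X N, (g (insert e (X N)) - g (X N)) :=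
      apply_union_le_add_sum_sdiff g hsub O (X N)
    _ ≤ g (X N) + ∑ j ∈ range N, (g (X (j + 1)) - g (X j)) := by
      rw [← sum_fiberwise (O \ X N) part, ← sum_fiberwise (range N) π]
      gcongr with i
      exact hpart i
    _ = 2 * g (X N) := by rw [sum_range_sub (fun j => g (X j)), hX0, hempty]; ring

open Finset in
/-- Locally greedy 2-approximation for partition matroids: Let `g` be a
monotone nondecreasing submodular function with `g(∅)=0` on subsets of a ground set
partitioned into parts (given by `part : E → Fin k`) with cardinality bounds `d i`.
The locally greedy algorithm fixes an arbitrary interleaved sequence `π` of part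
indices containing `d i` copies of index `i`, and at step `j` adds an as-yet-unchosen
element of part `π j` maximizing the marginal gain of `g`.  The resulting independent
set `X N` (where `N = ∑ i, d i`) satisfies `2 · g(X N) ≥ g(O)` for every independent
set `O`, i.e. every `O` with `|O ∩ E_i| ≤ d i` for all `i`. -/
theorem stmt10 {E : Type*} [Fintype E] [DecidableEq E]
    {k : ℕ} (part : E → Fin k) (d : Fin k → ℕ)
    (g : Finset E → ℝ)
    (hnonneg : ∀ S, 0 ≤ g S)
    (hempty : g ∅ = 0)
    (hmono : ∀ S T : Finset E, S ⊆ T → g S ≤ g T)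
    (hsub : ∀ S T : Finset E, S ⊆ T → ∀ c : E,
      g (insert c T) - g T ≤ g (insert c S) - g S)
    (N : ℕ) (hN : N = ∑ i, d i)
    (π : ℕ → Fin k)
    (hπ : ∀ i : Fin k, ((Finset.range N).filter (fun j => π j = i)).card = d i)
    (X : ℕ → Finset E)
    (hX0 : X 0 = ∅)
    (hstep : ∀ j < N, ∃ c : E, part c = π j ∧ c ∉ X j ∧ X (j + 1) = insert c (X j) ∧
      ∀ e : E, part e = π j → e ∉ X j →
        g (insert e (X j)) - g (X j) ≤ g (insert c (X j)) - g (X j)) :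
    ∀ O : Finset E, (∀ i : Fin k, (O.filter (fun e => part e = i)).card ≤ d i) →
      g O ≤ 2 * g (X N) :=
  stmt10_general part d g hempty hmono hsub N π hπ X hX0 hstep
end

section
/- If there are k ≥ 3 agents satisfying the Agent Indifference and Mechanism Indifference conditions (with each agent's utility zero when its own allocation is empty), then the agents are anonymous: f_i(S_1,...,S_k) = f_{π(i)}(S_{π(1)},...,S_{π(k)}) for every permutation π, every agent i, and all set tuples. -/
/-!
Agent indifference lets each utility `f i S` be evaluated on the allocation that gives `S i`
to agent `i`, the union of the other sets to a third agent `j`, and nothing to anybody else.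
On two such allocations that differ only in which agent `i` or `i'` holds the first set,
mechanism indifference and normalization equate `f i + f j` with `f i' + f j`, and agent
indifference equates the two values of `f j`; hence `f i = f i'`. Three agents are needed so
that `j` can be chosen distinct from both `i` and `i'`.
-/

open Set

section

variable {ι U : Type*}

def othersUnion (S : ι → Set U) (i : ι) : Set U :=
  ⋃ j ∈ ({j | j ≠ i} : Set ι), S j

def MechanismIndifferent [Fintype ι] (f : ι → (ι → Set U) → ℝ) : Prop :=
  ∀ S S' : ι → Set U, (⋃ i, S i) = (⋃ i, S' i) → ∑ i, f i S = ∑ i, f i S'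

def AgentIndifferent (f : ι → (ι → Set U) → ℝ) : Prop :=
  ∀ i S S', S i = S' i → othersUnion S i = othersUnion S' i → f i S = f i S'

def Normalized (f : ι → (ι → Set U) → ℝ) : Prop :=
  ∀ i S, S i = ∅ → f i S = 0

theorem othersUnion_perm (π : Equiv.Perm ι) (S : ι → Set U) (i : ι) :
    othersUnion (fun j => S (π.symm j)) (π i) = othersUnion S i := by
  ext x
  simp only [othersUnion, mem_iUnion, mem_ofPred_eq, exists_prop]
  constructor
  · rintro ⟨t, hti, hx⟩
    exact ⟨π.symm t, fun h => hti (π.symm_apply_eq.mp h), hx⟩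
  · rintro ⟨t, hti, hx⟩
    exact ⟨π t, fun h => hti (π.injective h), by simpa using hx⟩

section PairAllocation

variable [DecidableEq ι]

def pairAllocation (i j : ι) (A B : Set U) : ι → Set U :=
  fun t => if t = i then A else if t = j then B else ∅

variable {i j : ι} {A B : Set U}

@[simp]
theorem pairAllocation_left : pairAllocation i j A B i = A := if_pos rfl

@[simp]
theorem pairAllocation_right (hji : j ≠ i) : pairAllocation i j A B j = B := by
  simp [pairAllocation, hji]

theorem pairAllocation_of_ne {t : ι} (hti : t ≠ i) (htj : t ≠ j) :
    pairAllocation i j A B t = ∅ := by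
  simp [pairAllocation, hti, htj]

theorem iUnion_pairAllocation (hji : j ≠ i) : (⋃ t, pairAllocation i j A B t) = A ∪ B := by
  ext x
  simp only [mem_iUnion, mem_union, pairAllocation]
  constructor
  · rintro ⟨t, ht⟩
    split_ifs at ht
    exacts [Or.inl ht, Or.inr ht, ht.elim]
  · rintro (h | h)
    exacts [⟨i, by simp [h]⟩, ⟨j, by simp [hji, h]⟩]

theorem othersUnion_pairAllocation_left (hji : j ≠ i) :
    othersUnion (pairAllocation i j A B) i = B := by
  ext x
  simp only [othersUnion, mem_iUnion, mem_ofPred_eq, exists_prop]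
  constructor
  · rintro ⟨t, hti, ht⟩
    by_cases htj : t = j
    · rwa [htj, pairAllocation_right hji] at ht
    · rw [pairAllocation_of_ne hti htj] at ht
      exact ht.elim
  · intro h
    exact ⟨j, hji, by rwa [pairAllocation_right hji]⟩

theorem othersUnion_pairAllocation_right (hji : j ≠ i) :
    othersUnion (pairAllocation i j A B) j = A := by
  ext x
  simp only [othersUnion, mem_iUnion, mem_ofPred_eq, exists_prop]
  constructor
  · rintro ⟨t, htj, ht⟩
    by_cases hti : t = i
    · rwa [hti, pairAllocation_left] at ht
    · rw [pairAllocation_of_ne hti htj] at ht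
      exact ht.elim
  · intro h
    exact ⟨i, hji.symm, by rwa [pairAllocation_left]⟩

end PairAllocation

section Anonymity

variable {f : ι → (ι → Set U) → ℝ}

theorem Normalized.sum_pairAllocation [Fintype ι] [DecidableEq ι] (hN : Normalized f)
    {i j : ι} (hji : j ≠ i) (A B : Set U) :
    ∑ t, f t (pairAllocation i j A B) =
      f i (pairAllocation i j A B) + f j (pairAllocation i j A B) := by
  rw [← Finset.sum_subset (Finset.subset_univ {i, j}), Finset.sum_pair hji.symm]
  intro t _ ht
  simp only [Finset.mem_insert, Finset.mem_singleton, not_or] at ht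
  exact hN t _ (pairAllocation_of_ne ht.1 ht.2)

theorem AgentIndifferent.apply_eq_pairAllocation [DecidableEq ι] (hA : AgentIndifferent f)
    {i j : ι} (hji : j ≠ i) (S : ι → Set U) :
    f i S = f i (pairAllocation i j (S i) (othersUnion S i)) :=
  hA i _ _ pairAllocation_left.symm (othersUnion_pairAllocation_left hji).symm

theorem apply_pairAllocation_eq [Fintype ι] [DecidableEq ι] (hM : MechanismIndifferent f)
    (hA : AgentIndifferent f) (hN : Normalized f) {i i' j : ι} (hji : j ≠ i) (hji' : j ≠ i')
    (A B : Set U) :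
    f i (pairAllocation i j A B) = f i' (pairAllocation i' j A B) := by
  have hsum := hM (pairAllocation i j A B) (pairAllocation i' j A B)
    (by rw [iUnion_pairAllocation hji, iUnion_pairAllocation hji'])
  have hj : f j (pairAllocation i j A B) = f j (pairAllocation i' j A B) :=
    hA j _ _ (by rw [pairAllocation_right hji, pairAllocation_right hji'])
      (by rw [othersUnion_pairAllocation_right hji, othersUnion_pairAllocation_right hji'])
  rw [hN.sum_pairAllocation hji, hN.sum_pairAllocation hji'] at hsum
  linarith

theorem apply_eq_apply_of_othersUnion_eq [Fintype ι] (hι : 3 ≤ Fintype.card ι)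
    (hM : MechanismIndifferent f) (hA : AgentIndifferent f) (hN : Normalized f)
    {i i' : ι} {S S' : ι → Set U} (hown : S i = S' i')
    (hothers : othersUnion S i = othersUnion S' i') :
    f i S = f i' S' := by
  classical
  obtain ⟨j, hji, hji'⟩ :=
    Cardinal.exists_ne_ne_of_three_le (by simpa using hι) i i'
  rw [hA.apply_eq_pairAllocation hji, hA.apply_eq_pairAllocation hji' S', ← hown, ← hothers]
  exact apply_pairAllocation_eq hM hA hN hji hji' _ _

theorem apply_perm_eq [Fintype ι] (hι : 3 ≤ Fintype.card ι)
    (hM : MechanismIndifferent f) (hA : AgentIndifferent f) (hN : Normalized f)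
    (π : Equiv.Perm ι) (i : ι) (S : ι → Set U) :
    f (π i) (fun j => S (π.symm j)) = f i S :=
  apply_eq_apply_of_othersUnion_eq hι hM hA hN (by simp) (othersUnion_perm π S i)

end Anonymity

end

open Set in
/-- If there are `k ≥ 3` agents satisfying Agent Indifference (each
agent's utility depends only on its own set and the union of the others' sets) and
Mechanism Indifference (total welfare depends only on the union of all allocated
sets), with each agent's utility zero when its own allocation is empty, then the
agents are anonymous: `f_{π(i)}` applied to the permuted allocation (agent `π(j)`
receiving set `S_j`) equals `f_i(S₁,…,S_k)` for every permutation `π`. -/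
theorem stmt12 {U : Type*} (k : ℕ) (hk : 3 ≤ k)
    (f : Fin k → (Fin k → Set U) → ℝ)
    (hMeI : ∀ S S' : Fin k → Set U, (⋃ i, S i) = (⋃ i, S' i) →
      (∑ i, f i S) = (∑ i, f i S'))
    (hAgI : ∀ i : Fin k, ∀ S S' : Fin k → Set U, S i = S' i →
      (⋃ j ∈ ({j | j ≠ i} : Set (Fin k)), S j) = (⋃ j ∈ ({j | j ≠ i} : Set (Fin k)), S' j) →
      f i S = f i S')
    (hzero : ∀ i : Fin k, ∀ S : Fin k → Set U, S i = ∅ → f i S = 0) :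
    ∀ (π : Equiv.Perm (Fin k)) (i : Fin k) (S : Fin k → Set U),
      f i S = f (π i) (fun j => S (π.symm j)) :=
  fun π i S => (apply_perm_eq (by simpa using hk) hMeI hAgI hzero π i S).symm
end

section
/- For two players, Mechanism Indifference does not imply anonymity: the functions on ground set {a,b} defined by f₁(x,∅)=f₂(∅,x)=2 for singletons x, f₁({a,b},∅)=f₂(∅,{a,b})=3, f₁(x,y)=1.6 and f₂(x,y)=1.4 for disjoint singletons x,y, with all utilities 0 when the player's own set is empty nontrivially(with the other nonempty assigned the listed values), have submodular nondecreasing sum and satisfy MeI and adverse competition, but f₁(x,y) ≠ f₂(y,x), so anonymity fails. -/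
/-!
Both utilities depend only on the sizes of the two sets: `f₁ S T = cardUtility 1.6 |S| |T|` and
`f₂ S T = cardUtility 1.4 |T| |S|`. Since `1.6 + 1.4 = 3` is also the value of the grand bundle,
the welfare is `welfareOfCard |S ∪ T|`, where `welfareOfCard = 0, 2, 3` on `0, 1, 2` is
nondecreasing with decreasing increments; this gives monotonicity, submodularity and MeI at
once. Adverse competition holds because `1.6 ≤ 2`, and anonymity fails because `1.6 ≠ 1.4`.
-/

open Finset

variable {α : Type*} [DecidableEq α]

theorem Finset.sub_le_of_subset_of_antitone_increments {w : ℕ → ℝ} (hw : Monotone w)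
    (hΔ : Antitone fun n => w (n + 1) - w n) {U U' : Finset α} (hU : U ⊆ U') (e : α) :
    w #(insert e U') - w #U' ≤ w #(insert e U) - w #U := by
  by_cases he : e ∈ U'
  · have hgain : 0 ≤ w #(insert e U) - w #U :=
      sub_nonneg.2 (hw (card_le_card (subset_insert e U)))
    simpa [insert_eq_of_mem he] using hgain
  · rw [card_insert_of_notMem he, card_insert_of_notMem fun h => he (hU h)]
    exact hΔ (card_le_card hU)

def DependsOnCardUnion (F : Finset α → Finset α → ℝ) (w : ℕ → ℝ) : Prop :=
  ∀ S T, Disjoint S T → F S T = w #(S ∪ T)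

namespace DependsOnCardUnion

variable {F : Finset α → Finset α → ℝ} {w : ℕ → ℝ}

theorem swap (hF : DependsOnCardUnion F w) : DependsOnCardUnion (fun T S => F S T) w :=
  fun T S h => (hF S T h.symm).trans (by rw [union_comm])

theorem eq_of_union_eq (hF : DependsOnCardUnion F w) {S T S' T' : Finset α}
    (h : Disjoint S T) (h' : Disjoint S' T') (hU : S ∪ T = S' ∪ T') : F S T = F S' T' := by
  rw [hF S T h, hF S' T' h', hU]

theorem le_of_subset_left (hF : DependsOnCardUnion F w) (hw : Monotone w)
    {S S' T : Finset α} (hS : S ⊆ S') (h : Disjoint S' T) : F S T ≤ F S' T := by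
  rw [hF S T (h.mono_left hS), hF S' T h]
  exact hw (card_le_card (union_subset_union_left hS))

theorem insert_sub_le_left (hF : DependsOnCardUnion F w) (hw : Monotone w)
    (hΔ : Antitone fun n => w (n + 1) - w n) {S S' T : Finset α} (hS : S ⊆ S') (e : α)
    (h : Disjoint (insert e S') T) :
    F (insert e S') T - F S' T ≤ F (insert e S) T - F S T := by
  rw [hF _ _ h, hF _ _ (h.mono_left (subset_insert e S')),
    hF _ _ (h.mono_left (insert_subset_insert e hS)),
    hF _ _ (h.mono_left ((subset_insert e S').trans' hS)), insert_union, insert_union]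
  exact sub_le_of_subset_of_antitone_increments hw hΔ (union_subset_union_left hS) e

end DependsOnCardUnion

theorem Fin.two_finset_cases (S : Finset (Fin 2)) :
    S = ∅ ∨ S = {0} ∨ S = {1} ∨ S = univ := by
  decide +revert

def cardUtility (c : ℝ) (a b : ℕ) : ℝ := if a = 0 then 0 else if b = 0 then a + 1 else c

def welfareOfCard (n : ℕ) : ℝ := if n = 0 then 0 else n + 1

theorem cardUtility_antitone {c : ℝ} (hc : c ≤ 2) (a : ℕ) : Antitone (cardUtility c a) := by
  intro b b' hb
  rcases Nat.eq_zero_or_pos a with rfl | ha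
  · simp [cardUtility]
  · have : (1 : ℝ) ≤ a := Nat.one_le_cast.2 ha
    simp only [cardUtility, ha.ne', if_false]
    split_ifs <;> first | rfl | omega | linarith

theorem cardUtility_add_cardUtility_swap {c c' : ℝ} (hc : c + c' = 3) {a b : ℕ}
    (hab : a + b ≤ 2) : cardUtility c a b + cardUtility c' b a = welfareOfCard (a + b) := by
  have ha : a ≤ 2 := by omega
  have hb : b ≤ 2 - a := by omega
  interval_cases a <;> interval_cases b <;> norm_num [cardUtility, welfareOfCard, hc]

theorem welfareOfCard_monotone : Monotone welfareOfCard := by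
  refine monotone_nat_of_le_succ fun n => ?_
  rcases Nat.eq_zero_or_pos n with rfl | hn
  · norm_num [welfareOfCard]
  · simp [welfareOfCard, hn.ne']

theorem welfareOfCard_succ_sub (n : ℕ) :
    welfareOfCard (n + 1) - welfareOfCard n = if n = 0 then 2 else 1 := by
  rcases Nat.eq_zero_or_pos n with rfl | hn
  · norm_num [welfareOfCard]
  · simp [welfareOfCard, hn.ne']

theorem welfareOfCard_antitone_increments :
    Antitone fun n => welfareOfCard (n + 1) - welfareOfCard n := by
  intro m n hmn
  simp only [welfareOfCard_succ_sub]
  split_ifs <;> first | omega | norm_num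

theorem eq_cardUtility_of_disjoint {f : Finset (Fin 2) → Finset (Fin 2) → ℝ} {c : ℝ}
    (he : ∀ T, f ∅ T = 0) (hs : ∀ x, f {x} ∅ = 2) (hf : f univ ∅ = 3)
    (hxy : ∀ x y, x ≠ y → f {x} {y} = c) {S T : Finset (Fin 2)} (h : Disjoint S T) :
    f S T = cardUtility c #S #T := by
  rcases Fin.two_finset_cases S with rfl | rfl | rfl | rfl <;>
    rcases Fin.two_finset_cases T with rfl | rfl | rfl | rfl <;>
    first
      | exact absurd h (by decide)
      | norm_num [cardUtility, he, hs, hf, hxy]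

/-- For two players, Mechanism Indifference does not imply anonymity.
On ground set `{a,b} = Fin 2`, the utilities with `f₁(x,∅)=f₂(∅,x)=2` for singletons,
`f₁({a,b},∅)=f₂(∅,{a,b})=3`, `f₁(x,y)=1.6`, `f₂(x,y)=1.4` for disjoint singletons,
and `0` whenever the player's own set is empty, have a nondecreasing submodular sum,
satisfy MeI and adverse competition, yet `f₁(x,y) ≠ f₂(y,x)`: anonymity fails. -/
theorem stmt13 (f₁ f₂ : Finset (Fin 2) → Finset (Fin 2) → ℝ)
    (h1e : ∀ T, f₁ ∅ T = 0) (h2e : ∀ S, f₂ S ∅ = 0)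
    (h1s : ∀ x : Fin 2, f₁ {x} ∅ = 2) (h2s : ∀ x : Fin 2, f₂ ∅ {x} = 2)
    (h1f : f₁ Finset.univ ∅ = 3) (h2f : f₂ ∅ Finset.univ = 3)
    (h1xy : ∀ x y : Fin 2, x ≠ y → f₁ {x} {y} = 1.6)
    (h2xy : ∀ x y : Fin 2, x ≠ y → f₂ {x} {y} = 1.4) :
    -- the welfare f₁ + f₂ is nondecreasing in each player's set
    (∀ S S' T : Finset (Fin 2), S ⊆ S' → Disjoint S' T →
      f₁ S T + f₂ S T ≤ f₁ S' T + f₂ S' T) ∧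
    (∀ S T T' : Finset (Fin 2), T ⊆ T' → Disjoint S T' →
      f₁ S T + f₂ S T ≤ f₁ S T' + f₂ S T') ∧
    -- the welfare f₁ + f₂ is submodular in each player's set
    (∀ S S' T : Finset (Fin 2), S ⊆ S' → ∀ e, Disjoint (insert e S') T →
      (f₁ (insert e S') T + f₂ (insert e S') T) - (f₁ S' T + f₂ S' T) ≤
      (f₁ (insert e S) T + f₂ (insert e S) T) - (f₁ S T + f₂ S T)) ∧
    (∀ S T T' : Finset (Fin 2), T ⊆ T' → ∀ e, Disjoint S (insert e T') →
      (f₁ S (insert e T') + f₂ S (insert e T')) - (f₁ S T' + f₂ S T') ≤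
      (f₁ S (insert e T) + f₂ S (insert e T)) - (f₁ S T + f₂ S T)) ∧
    -- Mechanism Indifference: the welfare depends only on the union
    (∀ S T S' T' : Finset (Fin 2), Disjoint S T → Disjoint S' T' → S ∪ T = S' ∪ T' →
      f₁ S T + f₂ S T = f₁ S' T' + f₂ S' T') ∧
    -- adverse competition
    (∀ S T T' : Finset (Fin 2), T ⊆ T' → Disjoint S T' → f₁ S T' ≤ f₁ S T) ∧
    (∀ S S' T : Finset (Fin 2), S ⊆ S' → Disjoint S' T → f₂ S' T ≤ f₂ S T) ∧
    -- anonymity fails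
    ¬ (∀ S T : Finset (Fin 2), Disjoint S T → f₁ S T = f₂ T S) := by
  have hf₁ {S T} (h : Disjoint S T) : f₁ S T = cardUtility 1.6 #S #T :=
    eq_cardUtility_of_disjoint h1e h1s h1f h1xy h
  have hf₂ {S T} (h : Disjoint S T) : f₂ S T = cardUtility 1.4 #T #S :=
    eq_cardUtility_of_disjoint (f := fun S T => f₂ T S) h2e h2s h2f
      (fun x y hxy => h2xy y x hxy.symm) h.symm
  have hW : DependsOnCardUnion (fun S T => f₁ S T + f₂ S T) welfareOfCard := fun S T h => by
    dsimp only
    rw [hf₁ h, hf₂ h, card_union_of_disjoint h]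
    exact cardUtility_add_cardUtility_swap (by norm_num)
      (card_union_of_disjoint h ▸ card_le_univ (S ∪ T))
  have hmono := welfareOfCard_monotone
  have hΔ := welfareOfCard_antitone_increments
  refine ⟨fun S S' T => hW.le_of_subset_left hmono,
    fun S T T' hT h => hW.swap.le_of_subset_left hmono hT h.symm,
    fun S S' T hS e => hW.insert_sub_le_left hmono hΔ hS e,
    fun S T T' hT e h => hW.swap.insert_sub_le_left hmono hΔ hT e h.symm,
    fun S T S' T' => hW.eq_of_union_eq, ?_, ?_, ?_⟩
  · intro S T T' hT h
    rw [hf₁ h, hf₁ (h.mono_right hT)]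
    exact cardUtility_antitone (by norm_num) _ (card_le_card hT)
  · intro S S' T hS h
    rw [hf₂ h, hf₂ (h.mono_left hS)]
    exact cardUtility_antitone (by norm_num) _ (card_le_card hS)
  · intro h
    have h01 := h {0} {1} (by decide)
    rw [h1xy 0 1 (by decide), h2xy 1 0 (by decide)] at h01
    norm_num at h01
end

section
/- (Disjoint locally greedy, Lemma bounding residual optimum) Let w be a monotone nondecreasing submodular welfare function over k-tuples of disjoint sets, and let (I₁,...,I_k) be the output of the locally greedy algorithm with disjointness (each step adds to the designated player's set the best element not yet allocated to anyone). Let (O₁⁰,...,O_k⁰) be any valid allocation with |Oᵢ⁰| ≤ |Iᵢ| and Oᵢ⁰ disjoint from ⋃_{j≠i} I_j for all i. Then w(O₁⁰,...,O_k⁰) ≤ 2·w(I₁,...,I_k). -/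
/-!
Write `I = S N`. Monotonicity and submodularity give
`w(O) ≤ w(I ⊔ O) ≤ w(I) + ∑ᵢ ∑_{e ∈ Oᵢ} ρ_e^i(I)`.
An element `e ∈ Oᵢ \ Iᵢ` lies in no `I_j`, so it was available at every turn of player `i`;
by submodularity and the greedy choice, `ρ_e^i(I)` is at most the gain of each of these turns
(elements of `Oᵢ ∩ Iᵢ` contribute nothing).
As `|Oᵢ| ≤ |Iᵢ|` is the number of turns of player `i`, the `i`-th inner sum is at most the total
gain of player `i`'s turns; summed over the players, the gains telescope to `w(I)`.
-/

section

open Finset Function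

variable {ι U : Type*} [DecidableEq ι] [DecidableEq U]

def marginalGain (w : (ι → Finset U) → ℝ) (A : ι → Finset U) (i : ι) (e : U) : ℝ :=
  w (update A i (insert e (A i))) - w A

def DiminishingReturns (w : (ι → Finset U) → ℝ) : Prop :=
  ∀ A B : ι → Finset U, A ≤ B → ∀ i e, marginalGain w B i e ≤ marginalGain w A i e

lemma marginalGain_of_mem {w : (ι → Finset U) → ℝ} {A : ι → Finset U} {i : ι} {e : U}
    (he : e ∈ A i) : marginalGain w A i e = 0 := by
  simp [marginalGain, insert_eq_of_mem he]

lemma le_update_insert (A : ι → Finset U) (i : ι) (e : U) :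
    A ≤ update A i (insert e (A i)) := by
  intro j
  rcases eq_or_ne j i with rfl | hji
  · simp
  · simp [hji]

lemma DiminishingReturns.update_union_le {w : (ι → Finset U) → ℝ} (hw : DiminishingReturns w)
    (A : ι → Finset U) (i : ι) (s : Finset U) :
    w (update A i (A i ∪ s)) ≤ w A + ∑ e ∈ s, marginalGain w A i e := by
  induction s using Finset.induction_on generalizing A with
  | empty => simp
  | insert a s ha ih =>
    set A' := update A i (insert a (A i))
    have hA' : update A i (A i ∪ insert a s) = update A' i (A' i ∪ s) := by
      simp [A', union_insert, insert_union]
    calc w (update A i (A i ∪ insert a s)) = w (update A' i (A' i ∪ s)) := by rw [hA']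
      _ ≤ w A' + ∑ e ∈ s, marginalGain w A' i e := ih A'
      _ ≤ w A' + ∑ e ∈ s, marginalGain w A i e := by
        gcongr with e
        exact hw _ _ (le_update_insert A i a) i e
      _ = w A + ∑ e ∈ insert a s, marginalGain w A i e := by
        rw [sum_insert ha, marginalGain]
        ring

lemma DiminishingReturns.sup_le_add_sum [Fintype ι] {w : (ι → Finset U) → ℝ}
    (hw : DiminishingReturns w) (A T : ι → Finset U) :
    w (A ⊔ T) ≤ w A + ∑ i, ∑ e ∈ T i, marginalGain w A i e := by
  suffices ∀ s : Finset ι,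
      w (s.piecewise (A ⊔ T) A) ≤ w A + ∑ i ∈ s, ∑ e ∈ T i, marginalGain w A i e by
    simpa using this univ
  intro s
  induction s using Finset.induction_on with
  | empty => simp
  | insert j s hj ih =>
    set P := s.piecewise (A ⊔ T) A
    have hAP : A ≤ P := le_piecewise_of_le_of_le _ le_sup_left le_rfl
    have hPj : (A ⊔ T) j = P j ∪ T j := by simp [P, piecewise_eq_of_notMem _ _ _ hj]
    calc w ((insert j s).piecewise (A ⊔ T) A) = w (update P j (P j ∪ T j)) := by
          rw [piecewise_insert, hPj]
      _ ≤ w P + ∑ e ∈ T j, marginalGain w P j e := hw.update_union_le P j (T j)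
      _ ≤ w P + ∑ e ∈ T j, marginalGain w A j e := by
        gcongr with e
        exact hw _ _ hAP j e
      _ ≤ w A + ∑ i ∈ insert j s, ∑ e ∈ T i, marginalGain w A i e := by
        rw [sum_insert hj]
        linarith

lemma Finset.sum_le_sum_of_card_le {α β : Type*} {s : Finset α} {t : Finset β} {f : α → ℝ}
    {g : β → ℝ} (hcard : #s ≤ #t) (hfg : ∀ x ∈ s, ∀ y ∈ t, f x ≤ g y)
    (hg : ∀ y ∈ t, 0 ≤ g y) : ∑ x ∈ s, f x ≤ ∑ y ∈ t, g y := by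
  rcases t.eq_empty_or_nonempty with rfl | ht
  · simp [card_eq_zero.mp (Nat.le_zero.mp hcard)]
  obtain ⟨y₀, hy₀, hmin⟩ := exists_min_image t g ht
  calc ∑ x ∈ s, f x ≤ #s • g y₀ := sum_le_card_nsmul s f (g y₀) fun x hx => hfg x hx y₀ hy₀
    _ ≤ #t • g y₀ := nsmul_le_nsmul_left (hg y₀ hy₀) hcard
    _ ≤ ∑ y ∈ t, g y := card_nsmul_le_sum t g (g y₀) hmin

def IsLocallyGreedyStep (w : (ι → Finset U) → ℝ) (π : ℕ → ι) (S : ℕ → ι → Finset U)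
    (j : ℕ) : Prop :=
  ∃ c : U, (∀ i, c ∉ S j i) ∧ S (j + 1) = update (S j) (π j) (insert c (S j (π j))) ∧
    ∀ e : U, (∀ i, e ∉ S j i) → marginalGain w (S j) (π j) e ≤ w (S (j + 1)) - w (S j)

namespace IsLocallyGreedyStep

variable {w : (ι → Finset U) → ℝ} {π : ℕ → ι} {S : ℕ → ι → Finset U} {j : ℕ}

lemma le_succ (h : IsLocallyGreedyStep w π S j) : S j ≤ S (j + 1) := by
  obtain ⟨c, -, hS, -⟩ := h
  exact hS ▸ le_update_insert _ _ _

lemma card_succ (h : IsLocallyGreedyStep w π S j) (i : ι) :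
    #(S (j + 1) i) = #(S j i) + if π j = i then 1 else 0 := by
  obtain ⟨c, hc, hS, -⟩ := h
  rcases eq_or_ne (π j) i with rfl | hji
  · simp [hS, card_insert_of_notMem (hc (π j))]
  · simp [hS, hji, Ne.symm hji]

lemma marginalGain_le (h : IsLocallyGreedyStep w π S j) (hw : DiminishingReturns w)
    {B : ι → Finset U} (hSB : S j ≤ B) {e : U} (he : ∀ i, e ∉ B i) :
    marginalGain w B (π j) e ≤ w (S (j + 1)) - w (S j) := by
  obtain ⟨c, -, -, hbest⟩ := h
  exact (hw _ _ hSB _ e).trans (hbest e fun i hei => he i (hSB i hei))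

end IsLocallyGreedyStep

section LocallyGreedyRun

variable {w : (ι → Finset U) → ℝ} {π : ℕ → ι} {S : ℕ → ι → Finset U} {N : ℕ}

lemma locallyGreedy_mono (hstep : ∀ j < N, IsLocallyGreedyStep w π S j) {a b : ℕ}
    (hab : a ≤ b) (hbN : b ≤ N) : S a ≤ S b := by
  induction b, hab using Nat.le_induction with
  | base => exact le_rfl
  | succ b _ ih => exact (ih (by omega)).trans (hstep b (by omega)).le_succ

lemma locallyGreedy_card (hS0 : S 0 = fun _ => ∅)
    (hstep : ∀ j < N, IsLocallyGreedyStep w π S j) (i : ι) :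
    #(S N i) = #{j ∈ range N | π j = i} := by
  induction N with
  | zero => simp [hS0]
  | succ n ih =>
    rw [(hstep n n.lt_succ_self).card_succ, ih fun j hj => hstep j (by omega),
      range_add_one, filter_insert]
    split_ifs <;> simp

lemma sum_marginalGain_le_sum_gain (hw : DiminishingReturns w)
    (hmono : Monotone w) (hS0 : S 0 = fun _ => ∅)
    (hstep : ∀ j < N, IsLocallyGreedyStep w π S j) (i : ι) (O : Finset U)
    (hcard : #O ≤ #(S N i)) (hO : ∀ i', i' ≠ i → Disjoint O (S N i')) :
    ∑ e ∈ O, marginalGain w (S N) i e ≤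
      ∑ j ∈ range N with π j = i, (w (S (j + 1)) - w (S j)) := by
  have hgain : ∀ j < N, 0 ≤ w (S (j + 1)) - w (S j) := fun j hj =>
    sub_nonneg.mpr (hmono (hstep j hj).le_succ)
  refine sum_le_sum_of_card_le (hcard.trans (locallyGreedy_card hS0 hstep i).le) ?_ ?_
  · intro e he j hj
    obtain ⟨hjN, rfl⟩ : j < N ∧ π j = i := by simpa using hj
    by_cases heS : e ∈ S N (π j)
    · rw [marginalGain_of_mem heS]
      exact hgain j hjN
    · refine (hstep j hjN).marginalGain_le hw (locallyGreedy_mono hstep hjN.le le_rfl) ?_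
      intro i'
      rcases eq_or_ne i' (π j) with rfl | hi'
      · exact heS
      · exact disjoint_left.mp (hO i' hi') he
  · intro j hj
    exact hgain j (mem_range.mp (mem_filter.mp hj).1)

end LocallyGreedyRun

end

theorem stmt16_general {U : Type*} [DecidableEq U] {k : ℕ}
    (w : (Fin k → Finset U) → ℝ)
    (hempty : w (fun _ => ∅) = 0)
    (hmono : ∀ A B : Fin k → Finset U, (∀ i, A i ⊆ B i) → w A ≤ w B)
    (hsub : ∀ A B : Fin k → Finset U, (∀ i, A i ⊆ B i) → ∀ (i : Fin k) (e : U),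
      w (Function.update B i (insert e (B i))) - w B ≤
      w (Function.update A i (insert e (A i))) - w A)
    (N : ℕ) (π : ℕ → Fin k)
    (S : ℕ → Fin k → Finset U)
    (hS0 : S 0 = fun _ => ∅)
    (hstep : ∀ j < N, ∃ c : U, (∀ i, c ∉ S j i) ∧
      S (j + 1) = Function.update (S j) (π j) (insert c (S j (π j))) ∧
      ∀ e : U, (∀ i, e ∉ S j i) →
        w (Function.update (S j) (π j) (insert e (S j (π j)))) - w (S j) ≤
        w (S (j + 1)) - w (S j))
    (O : Fin k → Finset U)
    (hOcard : ∀ i, (O i).card ≤ (S N i).card)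
    (hOI : ∀ i j : Fin k, i ≠ j → Disjoint (O i) (S N j)) :
    w O ≤ 2 * w (S N) := by
  have hw : DiminishingReturns w := hsub
  have hw_mono : Monotone w := fun A B => hmono A B
  calc w O ≤ w (S N ⊔ O) := hw_mono le_sup_right
    _ ≤ w (S N) + ∑ i, ∑ e ∈ O i, marginalGain w (S N) i e := hw.sup_le_add_sum (S N) O
    _ ≤ w (S N) + ∑ i, ∑ j ∈ Finset.range N with π j = i, (w (S (j + 1)) - w (S j)) := by
      gcongr with i
      exact sum_marginalGain_le_sum_gain hw hw_mono hS0 hstep i (O i) (hOcard i)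
        fun i' hi' => hOI i i' hi'.symm
    _ = 2 * w (S N) := by
      rw [Finset.sum_fiberwise, Finset.sum_range_sub (fun j => w (S j)), hS0, hempty]
      ring

/-- Disjoint locally greedy, residual-optimum lemma: Let `w` be a
monotone nondecreasing submodular welfare function over `k`-tuples of sets with
`w(∅,…,∅)=0`, and let `(I₁,…,I_k) = S N` be the output of the locally greedy
algorithm with disjointness: at each step `j` the designated player `π j` receives
the element of maximum marginal gain among elements not yet allocated to anyone.
Let `(O₁⁰,…,O_k⁰)` be any valid (pairwise disjoint) allocation with
`|Oᵢ⁰| ≤ |Iᵢ|` and `Oᵢ⁰` disjoint from `⋃_{j≠i} I_j` for all `i`.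
Then `w(O₁⁰,…,O_k⁰) ≤ 2·w(I₁,…,I_k)`. -/
theorem stmt16 {U : Type*} [Fintype U] [DecidableEq U] {k : ℕ}
    (w : (Fin k → Finset U) → ℝ)
    (hnonneg : ∀ A, 0 ≤ w A)
    (hempty : w (fun _ => ∅) = 0)
    (hmono : ∀ A B : Fin k → Finset U, (∀ i, A i ⊆ B i) → w A ≤ w B)
    (hsub : ∀ A B : Fin k → Finset U, (∀ i, A i ⊆ B i) → ∀ (i : Fin k) (e : U),
      w (Function.update B i (insert e (B i))) - w B ≤
      w (Function.update A i (insert e (A i))) - w A)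
    (N : ℕ) (π : ℕ → Fin k)
    (S : ℕ → Fin k → Finset U)
    (hS0 : S 0 = fun _ => ∅)
    (hstep : ∀ j < N, ∃ c : U, (∀ i, c ∉ S j i) ∧
      S (j + 1) = Function.update (S j) (π j) (insert c (S j (π j))) ∧
      ∀ e : U, (∀ i, e ∉ S j i) →
        w (Function.update (S j) (π j) (insert e (S j (π j)))) - w (S j) ≤
        w (S (j + 1)) - w (S j))
    (O : Fin k → Finset U)
    (hOdisj : ∀ i j : Fin k, i ≠ j → Disjoint (O i) (O j))
    (hOcard : ∀ i, (O i).card ≤ (S N i).card)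
    (hOI : ∀ i j : Fin k, i ≠ j → Disjoint (O i) (S N j)) :
    w O ≤ 2 * w (S N) :=
  stmt16_general w hempty hmono hsub N π S hS0 hstep O hOcard hOI
end

section
/- (Disjoint locally greedy (k+1)-approximation) Under agent anonymity, for any ordering of player turns, the locally greedy algorithm with disjointness produces an allocation (I₁,...,I_k) with w(O₁,...,O_k) ≤ (k+1)·w(I₁,...,I_k) for every valid disjoint allocation (O₁,...,O_k) with |Oᵢ| = |Iᵢ|, given the decomposition: w(O) ≤ w(O⁰) + (k-1)·w(I) where Oᵢ⁰ = Oᵢ \ ⋃_{j≠i} I_j, combined with w(O⁰) ≤ 2·w(I). -/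
/-!
Write `I` for the greedy allocation and `O⁰ᵢ = Oᵢ \ ⋃_{j ≠ i} I_j`. An element of `Oᵢ` outside
`O⁰ᵢ` lies in some `I_{i+s}` with `s ≠ 0` in `ℤ/k`, so `O ≤ O⁰ ⊔ ⨆_{s ≠ 0} (I ∘ (· + s))`, and
subadditivity together with anonymity gives `w O ≤ w O⁰ + (k - 1) w I`.

An element of `O⁰ₚ \ Iₚ` is unallocated throughout the run, hence available at each of the
`|Iₚ| = |Oₚ| ≥ |O⁰ₚ|` turns of player `p`. By diminishing returns its marginal value over `I` is at
most the greedy gain of any of these turns, so summing over `p` bounds `w (I ⊔ O⁰) - w I` by the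
total gain `w I`, i.e. `w O⁰ ≤ 2 w I`.
-/

open Finset

theorem Finset.sum_le_sum_of_card_le_of_forall_le_s17 {α β M : Type*} [AddCommMonoid M]
    [LinearOrder M] [IsOrderedAddMonoid M] {s : Finset α} {t : Finset β} {f : α → M}
    {g : β → M} (hst : #s ≤ #t) (hfg : ∀ x ∈ s, ∀ y ∈ t, f x ≤ g y)
    (hg : ∀ y ∈ t, 0 ≤ g y) : ∑ x ∈ s, f x ≤ ∑ y ∈ t, g y := by
  rcases t.eq_empty_or_nonempty with rfl | ht
  · rw [card_eq_zero.mp (Nat.le_zero.mp hst)]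
    simp
  calc ∑ x ∈ s, f x ≤ #s • t.inf' ht g :=
        sum_le_card_nsmul _ _ _ fun x hx => le_inf' ht g fun y hy => hfg x hx y hy
    _ ≤ #t • t.inf' ht g := nsmul_le_nsmul_left (le_inf' ht g hg) hst
    _ ≤ ∑ y ∈ t, g y := card_nsmul_le_sum _ _ _ fun y hy => inf'_le g hy

section

variable {ι U : Type*} [DecidableEq ι] [DecidableEq U]

theorem sup_update_bot_singleton (B : ι → Finset U) (i : ι) (e : U) :
    B ⊔ Function.update ⊥ i {e} = Function.update B i (insert e (B i)) := by
  ext j x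
  by_cases h : j = i
  · subst h
    simp
  · simp [h]

def HasDiminishingReturns (w : (ι → Finset U) → ℝ) : Prop :=
  ∀ A B : ι → Finset U, (∀ i, A i ⊆ B i) → ∀ (i : ι) (e : U),
    w (Function.update B i (insert e (B i))) - w B ≤
    w (Function.update A i (insert e (A i))) - w A

section Finite

variable [Fintype ι]

theorem sup_sigma_update_bot_singleton (C : ι → Finset U) :
    (univ.sigma C).sup (fun x => Function.update ⊥ x.1 {x.2}) = C := by
  ext i e
  simp [Finset.sup_apply, mem_sup, Function.update_apply, apply_ite (e ∈ ·)]

namespace HasDiminishingReturns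

variable {w : (ι → Finset U) → ℝ}

theorem sup_sub_le_sup_sub (hw : HasDiminishingReturns w) {A B : ι → Finset U} (hAB : A ≤ B)
    (C : ι → Finset U) : w (B ⊔ C) - w B ≤ w (A ⊔ C) - w A := by
  rw [← sup_sigma_update_bot_singleton C]
  refine Finset.sup_induction (p := fun C => ∀ ⦃A B : ι → Finset U⦄, A ≤ B →
    w (B ⊔ C) - w B ≤ w (A ⊔ C) - w A) (by simp) (fun C hC D hD A B hAB => ?_)
    (fun x _ A B hAB => ?_) hAB
  · -- the marginal value of `C ⊔ D` over `B` is that of `C` over `B` plus that of `D` over `B ⊔ C`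
    have hC' := hC hAB
    have hD' := hD (sup_le_sup_right hAB C)
    rw [← sup_assoc, ← sup_assoc]
    linarith
  · rw [sup_update_bot_singleton, sup_update_bot_singleton]
    exact hw A B hAB x.1 x.2

theorem sup_le_add (hw : HasDiminishingReturns w) (h0 : w ⊥ = 0) (A C : ι → Finset U) :
    w (A ⊔ C) ≤ w A + w C := by
  have := hw.sup_sub_le_sup_sub (bot_le : ⊥ ≤ A) C
  rw [bot_sup_eq, h0] at this
  linarith

theorem finset_sup_le_sum (hw : HasDiminishingReturns w) (h0 : w ⊥ = 0) {α : Type*}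
    (s : Finset α) (f : α → ι → Finset U) : w (s.sup f) ≤ ∑ x ∈ s, w (f x) :=
  s.apply_sup_le_sum h0 (hw.sup_le_add h0 _ _)

theorem sup_sub_le_sum (hw : HasDiminishingReturns w) (B C : ι → Finset U) :
    w (B ⊔ C) - w B ≤ ∑ p, ∑ e ∈ C p, (w (Function.update B p (insert e (B p))) - w B) := by
  have hsubadd : ∀ {C D : ι → Finset U},
      w (B ⊔ (C ⊔ D)) - w B ≤ (w (B ⊔ C) - w B) + (w (B ⊔ D) - w B) := by
    intro C D
    have := hw.sup_sub_le_sup_sub (le_sup_left : B ≤ B ⊔ C) D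
    rw [← sup_assoc]
    linarith
  conv_lhs => rw [← sup_sigma_update_bot_singleton C]
  refine ((univ.sigma C).apply_sup_le_sum (f := fun C => w (B ⊔ C) - w B) (by simp)
    hsubadd).trans_eq ?_
  simp only [sum_sigma, sup_update_bot_singleton]

end HasDiminishingReturns

def unclaimedPart (O I : ι → Finset U) (i : ι) : Finset U :=
  O i \ (univ.erase i).biUnion I

theorem mem_unclaimedPart_sdiff {O I : ι → Finset U} {p : ι} {e : U} :
    e ∈ (unclaimedPart O I \ I) p ↔ e ∈ O p ∧ ∀ i, e ∉ I i := by
  simp only [Pi.sdiff_apply, unclaimedPart, mem_sdiff, mem_biUnion, mem_erase, mem_univ,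
    and_true, not_exists, not_and]
  grind

end Finite

theorem le_unclaimedPart_sup_shifts {k : ℕ} [NeZero k] (O I : Fin k → Finset U) :
    O ≤ unclaimedPart O I ⊔ (univ.erase 0).sup fun s => I ∘ Equiv.addRight s := by
  intro i e he
  simp only [Pi.sup_apply, sup_eq_union, Finset.sup_apply, mem_union, unclaimedPart, mem_sdiff,
    mem_biUnion, mem_erase, mem_univ, and_true, mem_sup, Function.comp_apply,
    Equiv.coe_addRight]
  by_cases h : ∃ j ≠ i, e ∈ I j
  · obtain ⟨j, hji, hej⟩ := h
    exact Or.inr ⟨j - i, sub_ne_zero.mpr hji, by rwa [add_sub_cancel]⟩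
  · exact Or.inl ⟨he, h⟩

theorem HasDiminishingReturns.apply_le_apply_unclaimedPart_add {k : ℕ} [NeZero k]
    {w : (Fin k → Finset U) → ℝ} (hw : HasDiminishingReturns w) (h0 : w ⊥ = 0)
    (hmono : Monotone w)
    (hanon : ∀ (σ : Equiv.Perm (Fin k)) (A : Fin k → Finset U), w (A ∘ σ) = w A)
    (O I : Fin k → Finset U) : w O ≤ w (unclaimedPart O I) + (k - 1) * w I :=
  calc w O ≤ w (unclaimedPart O I ⊔ (univ.erase 0).sup fun s => I ∘ Equiv.addRight s) :=
        hmono (le_unclaimedPart_sup_shifts O I)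
    _ ≤ w (unclaimedPart O I) + ∑ s ∈ univ.erase 0, w (I ∘ Equiv.addRight s) :=
        (hw.sup_le_add h0 _ _).trans (add_le_add le_rfl (hw.finset_sup_le_sum h0 _ _))
    _ = w (unclaimedPart O I) + (k - 1) * w I := by
        rw [sum_congr rfl fun s _ => hanon (Equiv.addRight s) I, sum_const,
          card_erase_of_mem (mem_univ _), card_univ, Fintype.card_fin, nsmul_eq_mul,
          Nat.cast_pred (NeZero.pos k)]

def IsDisjointLocallyGreedy (w : (ι → Finset U) → ℝ) (π : ℕ → ι) (S : ℕ → ι → Finset U)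
    (N : ℕ) : Prop :=
  ∀ j < N, ∃ c : U, (∀ i, c ∉ S j i) ∧
    S (j + 1) = Function.update (S j) (π j) (insert c (S j (π j))) ∧
    ∀ e : U, (∀ i, e ∉ S j i) →
      w (Function.update (S j) (π j) (insert e (S j (π j)))) - w (S j) ≤
      w (S (j + 1)) - w (S j)

namespace IsDisjointLocallyGreedy

variable {w : (ι → Finset U) → ℝ} {π : ℕ → ι} {S : ℕ → ι → Finset U} {N : ℕ}

theorem le_succ (h : IsDisjointLocallyGreedy w π S N) {j : ℕ} (hj : j < N) :
    S j ≤ S (j + 1) := by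
  obtain ⟨c, -, hS, -⟩ := h j hj
  rw [hS, ← sup_update_bot_singleton]
  exact le_sup_left

theorem le_of_le (h : IsDisjointLocallyGreedy w π S N) {i j : ℕ} (hij : i ≤ j) (hj : j ≤ N) :
    S i ≤ S j := by
  induction j, hij using Nat.le_induction with
  | base => exact le_rfl
  | succ n _ ih => exact (ih (by omega)).trans (h.le_succ hj)

theorem card_eq_card_turns (h : IsDisjointLocallyGreedy w π S N) (hS0 : S 0 = ⊥) {m : ℕ}
    (hm : m ≤ N) (p : ι) : #(S m p) = #{j ∈ range m | π j = p} := by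
  induction m with
  | zero => simp [hS0]
  | succ m ih =>
    obtain ⟨c, hc, hS, -⟩ := h m hm
    rw [hS, range_add_one, filter_insert]
    by_cases hp : π m = p
    · subst hp
      rw [Function.update_self, card_insert_of_notMem (hc _), if_pos rfl,
        card_insert_of_notMem (by simp), ih (by omega)]
    · rw [Function.update_of_ne (Ne.symm hp), if_neg hp, ih (by omega)]

theorem marginal_le_gain (h : IsDisjointLocallyGreedy w π S N)
    (hw : HasDiminishingReturns w) {j : ℕ} (hj : j < N) {e : U} (he : ∀ i, e ∉ S N i) :
    w (Function.update (S N) (π j) (insert e (S N (π j)))) - w (S N) ≤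
      w (S (j + 1)) - w (S j) := by
  obtain ⟨c, -, -, hgreedy⟩ := h j hj
  have hle : S j ≤ S N := h.le_of_le hj.le le_rfl
  exact (hw _ _ hle _ e).trans (hgreedy e fun i hei => he i (hle i hei))

theorem sup_sub_le [Fintype ι] (h : IsDisjointLocallyGreedy w π S N)
    (hw : HasDiminishingReturns w) (hmono : Monotone w) (h0 : w ⊥ = 0) (hS0 : S 0 = ⊥)
    (C : ι → Finset U) (hfree : ∀ p, ∀ e ∈ C p, ∀ i, e ∉ S N i)
    (hcard : ∀ p, #(C p) ≤ #(S N p)) : w (S N ⊔ C) - w (S N) ≤ w (S N) := by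
  have hgain : ∀ j < N, 0 ≤ w (S (j + 1)) - w (S j) := fun j hj =>
    sub_nonneg.mpr (hmono (h.le_succ hj))
  calc w (S N ⊔ C) - w (S N)
      ≤ ∑ p, ∑ e ∈ C p, (w (Function.update (S N) p (insert e (S N p))) - w (S N)) :=
        hw.sup_sub_le_sum _ _
    _ ≤ ∑ p, ∑ j ∈ range N with π j = p, (w (S (j + 1)) - w (S j)) := by
        refine sum_le_sum fun p _ => sum_le_sum_of_card_le_of_forall_le_s17 ?_ ?_ ?_
        · rw [← h.card_eq_card_turns hS0 le_rfl]
          exact hcard p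
        · intro e he j hj
          rw [mem_filter, mem_range] at hj
          rw [← hj.2]
          exact h.marginal_le_gain hw hj.1 (hfree p e he)
        · intro j hj
          exact hgain j (mem_range.mp (mem_filter.mp hj).1)
    _ = ∑ j ∈ range N, (w (S (j + 1)) - w (S j)) :=
        sum_fiberwise_of_maps_to (fun j _ => mem_univ (π j)) _
    _ = w (S N) := by rw [sum_range_sub (fun j => w (S j)), hS0, h0, sub_zero]

theorem apply_unclaimedPart_le [Fintype ι] (h : IsDisjointLocallyGreedy w π S N)
    (hw : HasDiminishingReturns w) (hmono : Monotone w) (h0 : w ⊥ = 0) (hS0 : S 0 = ⊥)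
    (O : ι → Finset U) (hOcard : ∀ i, #(O i) = #(S N i)) :
    w (unclaimedPart O (S N)) ≤ 2 * w (S N) := by
  have hC := h.sup_sub_le hw hmono h0 hS0 (unclaimedPart O (S N) \ S N)
    (fun p e he => (mem_unclaimedPart_sdiff.mp he).2)
    (fun p => hOcard p ▸ card_le_card fun e he => (mem_unclaimedPart_sdiff.mp he).1)
  rw [sup_sdiff_self_right] at hC
  have := hmono (le_sup_right : unclaimedPart O (S N) ≤ S N ⊔ unclaimedPart O (S N))
  linarith

end IsDisjointLocallyGreedy

end

theorem stmt17_general {U : Type*} [DecidableEq U] {k : ℕ}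
    (w : (Fin k → Finset U) → ℝ)
    (hempty : w (fun _ => ∅) = 0)
    (hmono : ∀ A B : Fin k → Finset U, (∀ i, A i ⊆ B i) → w A ≤ w B)
    (hsub : ∀ A B : Fin k → Finset U, (∀ i, A i ⊆ B i) → ∀ (i : Fin k) (e : U),
      w (Function.update B i (insert e (B i))) - w B ≤
      w (Function.update A i (insert e (A i))) - w A)
    -- anonymity: welfare is invariant under permuting the players
    (hanon : ∀ (σ : Equiv.Perm (Fin k)) (A : Fin k → Finset U), w (A ∘ σ) = w A)
    (N : ℕ) (π : ℕ → Fin k)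
    (S : ℕ → Fin k → Finset U)
    (hS0 : S 0 = fun _ => ∅)
    (hstep : ∀ j < N, ∃ c : U, (∀ i, c ∉ S j i) ∧
      S (j + 1) = Function.update (S j) (π j) (insert c (S j (π j))) ∧
      ∀ e : U, (∀ i, e ∉ S j i) →
        w (Function.update (S j) (π j) (insert e (S j (π j)))) - w (S j) ≤
        w (S (j + 1)) - w (S j))
    (O : Fin k → Finset U)
    (hOcard : ∀ i, (O i).card = (S N i).card) :
    w O ≤ (k + 1 : ℝ) * w (S N) := by
  rcases Nat.eq_zero_or_pos k with rfl | hk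
  · rw [Subsingleton.elim O (S N)]
    simp
  have : NeZero k := ⟨hk.ne'⟩
  have hw : HasDiminishingReturns w := hsub
  have hgreedy : IsDisjointLocallyGreedy w π S N := hstep
  have hO := hw.apply_le_apply_unclaimedPart_add hempty hmono hanon O (S N)
  have hO0 := hgreedy.apply_unclaimedPart_le hw hmono hempty hS0 O hOcard
  linarith

/-- Disjoint locally greedy (k+1)-approximation: Under agent anonymity
(the welfare `w` is symmetric under permutations of the players), for any ordering of
player turns, the locally greedy algorithm with disjointness (each step adds to the
designated player's set the best element not yet allocated to anyone) produces an
allocation `(I₁,…,I_k) = S N` such that `w(O₁,…,O_k) ≤ (k+1)·w(I₁,…,I_k)` for every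
valid disjoint allocation `(O₁,…,O_k)` with `|Oᵢ| = |Iᵢ|`. -/
theorem stmt17 {U : Type*} [Fintype U] [DecidableEq U] {k : ℕ}
    (w : (Fin k → Finset U) → ℝ)
    (hnonneg : ∀ A, 0 ≤ w A)
    (hempty : w (fun _ => ∅) = 0)
    (hmono : ∀ A B : Fin k → Finset U, (∀ i, A i ⊆ B i) → w A ≤ w B)
    (hsub : ∀ A B : Fin k → Finset U, (∀ i, A i ⊆ B i) → ∀ (i : Fin k) (e : U),
      w (Function.update B i (insert e (B i))) - w B ≤
      w (Function.update A i (insert e (A i))) - w A)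
    -- anonymity: welfare is invariant under permuting the players
    (hanon : ∀ (σ : Equiv.Perm (Fin k)) (A : Fin k → Finset U), w (A ∘ σ) = w A)
    (N : ℕ) (π : ℕ → Fin k)
    (S : ℕ → Fin k → Finset U)
    (hS0 : S 0 = fun _ => ∅)
    (hstep : ∀ j < N, ∃ c : U, (∀ i, c ∉ S j i) ∧
      S (j + 1) = Function.update (S j) (π j) (insert c (S j (π j))) ∧
      ∀ e : U, (∀ i, e ∉ S j i) →
        w (Function.update (S j) (π j) (insert e (S j (π j)))) - w (S j) ≤
        w (S (j + 1)) - w (S j))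
    (O : Fin k → Finset U)
    (hOdisj : ∀ i j : Fin k, i ≠ j → Disjoint (O i) (O j))
    (hOcard : ∀ i, (O i).card = (S N i).card) :
    w O ≤ (k + 1 : ℝ) * w (S N) :=
  stmt17_general w hempty hmono hsub hanon N π S hS0 hstep O hOcard
end
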